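/- arXiv:2211.09471 — 4 statements merged into one kernel-verified Lean document; each statement's English description precedes it below -/
import Mathlib

section
/- Let a : ℝⁿ → ℝ be a smooth (C^∞) function, not identically zero, and let m ∈ ℝ. Then a is δ_λ-homogeneous of degree m if and only if a is a polynomial function a(x) = Σ_α c_α x^α whose coefficients satisfy c_α ≠ 0 only for multi-indices α with |α|_σ = m. Consequently, the set of degrees of smooth non-vanishing δ_λ-homogeneous functions is {|α|_σ : α ∈ ℕⁿ}, and such a function has degree m = 0 if and only if it is constant. -/
open Real Finset

/-- `a` is `δ_λ`-homogeneous of degree `m ∈ ℝ` for the anisotropic dilations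
`δ_λ(x) = (λ^{σ₁}x₁, …, λ^{σₙ}xₙ)`. -/
def IsDilHomogeneous (n : ℕ) (σ : Fin n → ℕ) (a : (Fin n → ℝ) → ℝ) (m : ℝ) : Prop :=
  ∀ l : ℝ, 0 < l → ∀ x : Fin n → ℝ, a (fun i => l ^ σ i * x i) = l ^ m * a x

namespace DilHomAux

open Filter Topology

noncomputable section


variable {n : ℕ} {σ : Fin n → ℕ}

/-- anisotropic dilation as a continuous linear map -/
def dilL (σ : Fin n → ℕ) (l : ℝ) : (Fin n → ℝ) →L[ℝ] (Fin n → ℝ) :=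
  ContinuousLinearMap.pi fun i => (l ^ σ i) • ContinuousLinearMap.proj i

lemma dilL_apply (l : ℝ) (x : Fin n → ℝ) : dilL σ l x = fun i => l ^ σ i * x i := rfl

/-- partial derivative -/
def pd (i : Fin n) (f : (Fin n → ℝ) → ℝ) : (Fin n → ℝ) → ℝ :=
  fun x => fderiv ℝ f x (Pi.single i 1)

lemma pd_contDiff (i : Fin n) {f : (Fin n → ℝ) → ℝ} (hf : ContDiff ℝ (⊤ : ℕ∞) f) :
    ContDiff ℝ (⊤ : ℕ∞) (pd i f) :=
  (hf.fderiv_right (by simp)).clm_apply contDiff_const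

lemma hom_pd {f : (Fin n → ℝ) → ℝ} (hf : ContDiff ℝ (⊤ : ℕ∞) f) {m : ℝ}
    (hhom : IsDilHomogeneous n σ f m) (i : Fin n) :
    IsDilHomogeneous n σ (pd i f) (m - σ i) := by
  intro l hl x
  have hdf := hf.differentiable (by simp)
  have h1 : HasFDerivAt (fun y => f (dilL σ l y))
      ((fderiv ℝ f (dilL σ l x)).comp (dilL σ l)) x :=
    ((hdf (dilL σ l x)).hasFDerivAt).comp x (dilL σ l).hasFDerivAt
  have h2 : HasFDerivAt (fun y => l ^ m * f y) (l ^ m • fderiv ℝ f x) x :=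
    ((hdf x).hasFDerivAt).const_mul (l ^ m)
  have hfun : (fun y => f (dilL σ l y)) = fun y => l ^ m * f y := by
    funext y
    rw [dilL_apply]
    exact hhom l hl y
  rw [hfun] at h1
  have huniq := h1.unique h2
  have key : fderiv ℝ f (dilL σ l x) (dilL σ l (Pi.single i 1)) = l ^ m * pd i f x := by
    have := congrArg (fun (L : (Fin n → ℝ) →L[ℝ] ℝ) => L (Pi.single i 1)) huniq
    simpa [pd] using this
  have hsingle : dilL σ l (Pi.single i 1) = (l ^ σ i) • (Pi.single i 1 : Fin n → ℝ) := by
    funext j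
    rw [dilL_apply]
    by_cases h : j = i
    · subst h; simp
    · simp [Pi.single_apply, h]
  rw [hsingle, map_smul] at key
  have hlpow : (0:ℝ) < l ^ σ i := pow_pos hl _
  have hrw : l ^ (m - (σ i : ℝ)) * l ^ (σ i : ℕ) = l ^ m := by
    rw [← Real.rpow_natCast l (σ i), ← Real.rpow_add hl]
    ring_nf
  have : pd i f (dilL σ l x) = l ^ (m - (σ i : ℝ)) * pd i f x := by
    have key' : l ^ σ i * pd i f (dilL σ l x) = l ^ m * pd i f x := by
      simpa [pd, smul_eq_mul] using key
    field_simp at key' ⊢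
    rw [mul_comm] at key'
    rw [← hrw] at key'
    nlinarith [key', hlpow]
  simpa [dilL_apply] using this


lemma tendsto_dil (hσpos : ∀ i, 0 < σ i) (x : Fin n → ℝ) :
    Tendsto (fun l : ℝ => (fun i => l ^ σ i * x i : Fin n → ℝ)) (𝓝[>] 0) (𝓝 0) := by
  rw [tendsto_pi_nhds]
  intro i
  have h : Tendsto (fun l : ℝ => l ^ σ i * x i) (𝓝 (0:ℝ)) (𝓝 ((0:ℝ) ^ σ i * x i)) :=
    ((continuous_pow (σ i)).mul continuous_const).tendsto 0
  rw [zero_pow (hσpos i).ne', zero_mul] at h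
  exact h.mono_left nhdsWithin_le_nhds

lemma hom_neg_zero (hσpos : ∀ i, 0 < σ i) {f : (Fin n → ℝ) → ℝ} (hf : Continuous f)
    {m : ℝ} (hm : m < 0) (hhom : IsDilHomogeneous n σ f m) (x : Fin n → ℝ) : f x = 0 := by
  have h1 : Tendsto (fun l : ℝ => l ^ (-m) * f (fun i => l ^ σ i * x i)) (𝓝[>] 0)
      (𝓝 (0 * f 0)) := by
    apply Tendsto.mul
    · have := (Real.continuousAt_rpow_const 0 (-m) (Or.inr (by linarith))).tendsto
      rw [Real.zero_rpow (by linarith : -m ≠ 0)] at this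
      exact this.mono_left nhdsWithin_le_nhds
    · exact (hf.tendsto 0).comp (tendsto_dil hσpos x)
  have h2 : (fun l : ℝ => l ^ (-m) * f (fun i => l ^ σ i * x i)) =ᶠ[𝓝[>] 0]
      fun _ => f x := by
    filter_upwards [self_mem_nhdsWithin] with l hl
    have hl' : (0:ℝ) < l := hl
    rw [hhom l hl' x, ← mul_assoc, ← Real.rpow_add hl', neg_add_cancel, Real.rpow_zero, one_mul]
  rw [zero_mul] at h1
  have := (tendsto_congr' h2).mp h1
  exact tendsto_nhds_unique this tendsto_const_nhds |>.symm

lemma hom_zero_const (hσpos : ∀ i, 0 < σ i) {f : (Fin n → ℝ) → ℝ} (hf : Continuous f)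
    (hhom : IsDilHomogeneous n σ f 0) (x : Fin n → ℝ) : f x = f 0 := by
  have h1 : Tendsto (fun l : ℝ => f (fun i => l ^ σ i * x i)) (𝓝[>] 0) (𝓝 (f 0)) :=
    (hf.tendsto 0).comp (tendsto_dil hσpos x)
  have h2 : (fun l : ℝ => f (fun i => l ^ σ i * x i)) =ᶠ[𝓝[>] 0] fun _ => f x := by
    filter_upwards [self_mem_nhdsWithin] with l hl
    rw [hhom l hl x, Real.rpow_zero, one_mul]
  exact (tendsto_nhds_unique ((tendsto_congr' h2).mp h1) tendsto_const_nhds).symm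


def toOneP (n : ℕ) (g : Fin n → Polynomial ℝ) : MvPolynomial (Fin n) ℝ →+* Polynomial ℝ :=
  MvPolynomial.eval₂Hom Polynomial.C g

lemma eval_toOneP (g : Fin n → Polynomial ℝ) (t : ℝ) (Q : MvPolynomial (Fin n) ℝ) :
    (toOneP n g Q).eval t = MvPolynomial.eval (fun i => (g i).eval t) Q := by
  induction Q using MvPolynomial.induction_on with
  | C a => simp [toOneP]
  | add p q hp hq => simp [map_add, hp, hq]
  | mul_X p i hp =>
    rw [map_mul, Polynomial.eval_mul, hp, map_mul]
    simp [toOneP]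

lemma toOneP_monomial (g : Fin n → Polynomial ℝ) (α : Fin n →₀ ℕ) (c : ℝ) :
    toOneP n g (MvPolynomial.monomial α c) = Polynomial.C c * ∏ j, (g j) ^ (α j) := by
  rw [toOneP, MvPolynomial.eval₂Hom_monomial]
  rw [Finsupp.prod_pow]

lemma toOne_monomial (x : Fin n → ℝ) (α : Fin n →₀ ℕ) (c : ℝ) :
    toOneP n (fun j => Polynomial.C (x j) * Polynomial.X) (MvPolynomial.monomial α c)
      = Polynomial.C (c * ∏ j, x j ^ α j) * Polynomial.X ^ (∑ j, α j) := by
  rw [toOneP_monomial]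
  simp only [mul_pow, Finset.prod_mul_distrib, ← map_pow, ← map_prod,
    Finset.prod_pow_eq_pow_sum, map_mul]
  ring

def antiD : Polynomial ℝ →ₗ[ℝ] Polynomial ℝ :=
  Polynomial.lsum fun k => ((k:ℝ)+1)⁻¹ •
    LinearMap.toSpanSingleton ℝ (Polynomial ℝ) (Polynomial.X ^ (k+1))

lemma antiD_monomial (k : ℕ) (a : ℝ) :
    antiD (Polynomial.monomial k a)
      = Polynomial.C (a/((k:ℝ)+1)) * Polynomial.X ^ (k+1) := by
  rw [antiD, Polynomial.lsum_apply, Polynomial.sum_monomial_index]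
  · rw [LinearMap.smul_apply, LinearMap.toSpanSingleton_apply, smul_smul,
      Polynomial.smul_eq_C_mul, inv_mul_eq_div]
  · simp

lemma antiD_derivative (q : Polynomial ℝ) : (antiD q).derivative = q := by
  induction q using Polynomial.induction_on' with
  | add p q hp hq => rw [map_add, map_add, hp, hq]
  | monomial k a =>
    rw [antiD_monomial, Polynomial.derivative_C_mul_X_pow]
    have h : a / ((k:ℝ)+1) * (↑(k+1)) = a := by push_cast; field_simp
    simp only [Nat.add_sub_cancel, h, Polynomial.C_mul_X_pow_eq_monomial]

lemma antiD_eval_zero (q : Polynomial ℝ) : (antiD q).eval 0 = 0 := by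
  induction q using Polynomial.induction_on' with
  | add p q hp hq => rw [map_add, Polynomial.eval_add, hp, hq, add_zero]
  | monomial k a => simp [antiD_monomial]

lemma ftc (g : ℝ → ℝ) (q : Polynomial ℝ) (hg : ∀ t, HasDerivAt g (q.eval t) t) :
    g 1 = g 0 + (antiD q).eval 1 := by
  have key : ∀ t : ℝ, HasDerivAt (fun s => g s - (antiD q).eval s) 0 t := by
    intro t
    have h2 : HasDerivAt (fun s => (antiD q).eval s) (q.eval t) t := by
      have := (antiD q).hasDerivAt t
      rwa [antiD_derivative] at this
    have h3 := (hg t).sub h2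
    rw [sub_self] at h3
    exact h3
  have hconst : (fun s => g s - (antiD q).eval s) 1 = (fun s => g s - (antiD q).eval s) 0 :=
    is_const_of_deriv_eq_zero (fun t => (key t).differentiableAt)
      (fun t => (key t).deriv) 1 0
  simp only at hconst
  rw [antiD_eval_zero] at hconst
  linarith
lemma reconstruct {f : (Fin n → ℝ) → ℝ} (hf : ContDiff ℝ (⊤ : ℕ∞) f)
    (P : Fin n → MvPolynomial (Fin n) ℝ)
    (hP : ∀ i x, pd i f x = MvPolynomial.eval x (P i)) :
    ∃ Q : MvPolynomial (Fin n) ℝ, ∀ x, f x = MvPolynomial.eval x Q := by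
  classical
  refine ⟨MvPolynomial.C (f 0) + ∑ i, MvPolynomial.X i *
      ∑ α ∈ (P i).support, MvPolynomial.monomial α
        ((MvPolynomial.coeff α (P i)) / ((∑ j, α j : ℕ) + 1)), fun x => ?_⟩
  set q : Polynomial ℝ := ∑ i, Polynomial.C (x i) *
    toOneP n (fun j => Polynomial.C (x j) * Polynomial.X) (P i) with hq
  -- the derivative of t ↦ f (t • x) is eval of q
  have hgderiv : ∀ t : ℝ, HasDerivAt (fun s : ℝ => f (s • x)) (q.eval t) t := by
    intro t
    have h1 : HasDerivAt (fun s : ℝ => s • x) ((1:ℝ) • x) t := (hasDerivAt_id t).smul_const x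
    have h2 : HasFDerivAt f (fderiv ℝ f (t • x)) (t • x) :=
      (hf.differentiable (by simp) _).hasFDerivAt
    have h3 : HasDerivAt (fun s : ℝ => f (s • x)) (fderiv ℝ f (t • x) ((1:ℝ) • x)) t :=
      h2.comp_hasDerivAt t h1
    convert h3 using 1
    rw [one_smul]
    have hx : (x : Fin n → ℝ) = ∑ i, x i • (Pi.single i 1 : Fin n → ℝ) := by
      conv_lhs => rw [← Finset.univ_sum_single x]
      refine Finset.sum_congr rfl fun i _ => ?_
      funext j
      rcases eq_or_ne j i with h | h
      · subst h; simp
      · simp [Pi.single_apply, h]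
    set L : (Fin n → ℝ) →L[ℝ] ℝ := fderiv ℝ f (t • x) with hL
    have hLx : L x = ∑ i, x i * L (Pi.single i 1) := by
      conv_lhs => rw [hx]
      rw [map_sum]
      refine Finset.sum_congr rfl fun i _ => ?_
      rw [map_smul, smul_eq_mul]
    rw [hLx, hq]
    simp only [Polynomial.eval_finset_sum, Polynomial.eval_mul, Polynomial.eval_C]
    refine Finset.sum_congr rfl fun i _ => ?_
    rw [eval_toOneP]
    have hfunj : (fun j => Polynomial.eval t (Polynomial.C (x j) * Polynomial.X)) = t • x := by
      funext j
      rw [Polynomial.eval_mul, Polynomial.eval_C, Polynomial.eval_X, Pi.smul_apply,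
        smul_eq_mul, mul_comm]
    rw [hfunj, ← hP i (t • x)]
    simp only [pd, ← hL]
  have hftc := ftc (fun s : ℝ => f (s • x)) q hgderiv
  simp only [one_smul, zero_smul] at hftc
  rw [hftc]
  -- now compute both polynomial expressions
  have hq_expand : q = ∑ i, ∑ α ∈ (P i).support,
      Polynomial.C (x i * (MvPolynomial.coeff α (P i) * ∏ j, x j ^ α j)) *
        Polynomial.X ^ (∑ j, α j) := by
    rw [hq]
    refine Finset.sum_congr rfl fun i _ => ?_
    conv_lhs => rw [← MvPolynomial.support_sum_monomial_coeff (P i)]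
    rw [map_sum, Finset.mul_sum]
    refine Finset.sum_congr rfl fun α _ => ?_
    rw [toOne_monomial, ← mul_assoc, ← Polynomial.C_mul]
  have hanti : (antiD q).eval 1 = ∑ i, ∑ α ∈ (P i).support,
      x i * (MvPolynomial.coeff α (P i) * ∏ j, x j ^ α j) / ((∑ j, α j : ℕ) + 1) := by
    rw [hq_expand, map_sum, Polynomial.eval_finset_sum]
    refine Finset.sum_congr rfl fun i _ => ?_
    rw [map_sum, Polynomial.eval_finset_sum]
    refine Finset.sum_congr rfl fun α _ => ?_
    rw [Polynomial.C_mul_X_pow_eq_monomial, antiD_monomial]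
    simp
  rw [hanti]
  rw [map_add, map_sum]
  simp only [MvPolynomial.eval_C]
  congr 1
  refine Finset.sum_congr rfl fun i _ => ?_
  rw [map_mul, map_sum, MvPolynomial.eval_X, Finset.mul_sum]
  refine Finset.sum_congr rfl fun α _ => ?_
  rw [MvPolynomial.eval_monomial, Finsupp.prod_pow]
  ring

lemma poly_of_hom (hσpos : ∀ i, 0 < σ i) :
    ∀ k : ℕ, ∀ f : (Fin n → ℝ) → ℝ, ContDiff ℝ (⊤ : ℕ∞) f → ∀ m : ℝ, m ≤ k →
      IsDilHomogeneous n σ f m → ∃ Q, ∀ x, f x = MvPolynomial.eval x Q := by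
  intro k
  induction k with
  | zero =>
    intro f hf m hm hhom
    rcases lt_or_eq_of_le hm with h | h
    · refine ⟨0, fun x => ?_⟩
      rw [hom_neg_zero hσpos hf.continuous (by exact_mod_cast h) hhom x]
      simp
    · refine ⟨MvPolynomial.C (f 0), fun x => ?_⟩
      have h0 : m = 0 := by exact_mod_cast h
      rw [hom_zero_const hσpos hf.continuous (h0 ▸ hhom) x]
      simp
  | succ k ih =>
    intro f hf m hm hhom
    rcases lt_trichotomy m 0 with h | h | h
    · refine ⟨0, fun x => ?_⟩
      rw [hom_neg_zero hσpos hf.continuous h hhom x]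
      simp
    · refine ⟨MvPolynomial.C (f 0), fun x => ?_⟩
      rw [hom_zero_const hσpos hf.continuous (h ▸ hhom) x]
      simp
    · choose P hP using fun i : Fin n =>
        ih (pd i f) (pd_contDiff i hf) (m - σ i)
          (by
            have h1 : (1:ℝ) ≤ σ i := by exact_mod_cast hσpos i
            push_cast at hm ⊢
            linarith)
          (hom_pd hf hhom i)
      exact reconstruct hf P hP

lemma toOneW_monomial (x : Fin n → ℝ) (α : Fin n →₀ ℕ) (c : ℝ) :
    toOneP n (fun j => Polynomial.C (x j) * Polynomial.X ^ σ j) (MvPolynomial.monomial α c)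
      = Polynomial.C (c * ∏ j, x j ^ α j) * Polynomial.X ^ (∑ j, α j * σ j) := by
  rw [toOneP_monomial]
  simp only [mul_pow, Finset.prod_mul_distrib, ← map_pow, ← map_prod, ← pow_mul',
    Finset.prod_pow_eq_pow_sum, map_mul]
  ring

lemma coeff_toOneW (x : Fin n → ℝ) (Q : MvPolynomial (Fin n) ℝ) (d : ℕ) :
    (toOneP n (fun j => Polynomial.C (x j) * Polynomial.X ^ σ j) Q).coeff d
      = ∑ α ∈ Q.support.filter (fun α => (∑ j, α j * σ j) = d),
          MvPolynomial.coeff α Q * ∏ j, x j ^ α j := by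
  conv_lhs => rw [← MvPolynomial.support_sum_monomial_coeff Q]
  rw [map_sum, Polynomial.finset_sum_coeff, Finset.sum_filter]
  refine Finset.sum_congr rfl fun α _ => ?_
  rw [toOneW_monomial, Polynomial.coeff_C_mul, Polynomial.coeff_X_pow]
  rcases eq_or_ne (∑ j, α j * σ j) d with h | h
  · rw [if_pos h, if_pos h.symm, mul_one]
  · rw [if_neg h, if_neg (Ne.symm h), mul_zero]

lemma hom_poly_weights (hσpos : ∀ i, 0 < σ i) {f : (Fin n → ℝ) → ℝ} {m : ℝ}
    (Q : MvPolynomial (Fin n) ℝ) (hfQ : ∀ x, f x = MvPolynomial.eval x Q)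
    (hhom : IsDilHomogeneous n σ f m) (x₀ : Fin n → ℝ) (hx₀ : f x₀ ≠ 0) :
    ∃ k : ℕ, m = (k : ℝ) ∧ ∀ α ∈ Q.support, (∑ i, α i * σ i) = k := by
  classical
  set W : (Fin n → ℝ) → Polynomial ℝ :=
    fun x => toOneP n (fun j => Polynomial.C (x j) * Polynomial.X ^ σ j) Q with hW
  have hevalpos : ∀ x, ∀ l : ℝ, 0 < l → (W x).eval l = l ^ m * f x := by
    intro x l hl
    rw [hW]
    rw [eval_toOneP]
    have harg : (fun i => Polynomial.eval l (Polynomial.C (x i) * Polynomial.X ^ σ i))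
        = fun i => l ^ σ i * x i := by
      funext i
      rw [Polynomial.eval_mul, Polynomial.eval_C, Polynomial.eval_pow, Polynomial.eval_X,
        mul_comm]
    rw [harg, ← hfQ, hhom l hl x]
  set p : Polynomial ℝ := W x₀ with hp
  have hderiv_eq : ∀ l : ℝ, 0 < l → p.derivative.eval l = m * l ^ (m - 1) * f x₀ := by
    intro l hl
    have h1 : HasDerivAt (fun s => p.eval s) (p.derivative.eval l) l := p.hasDerivAt l
    have h2 : HasDerivAt (fun s : ℝ => s ^ m * f x₀) (m * l ^ (m - 1) * f x₀) l :=
      (Real.hasDerivAt_rpow_const (Or.inl hl.ne')).mul_const _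
    have heq : (fun s : ℝ => s ^ m * f x₀) =ᶠ[nhds l] fun s => p.eval s := by
      filter_upwards [isOpen_Ioi.mem_nhds hl] with s hs
      exact (hevalpos x₀ s hs).symm
    exact ((h1.congr_of_eventuallyEq heq).unique h2).symm ▸ rfl
  have hpoly_id : Polynomial.X * p.derivative = m • p := by
    apply Polynomial.eq_of_infinite_eval_eq
    refine Set.Infinite.mono (fun l hl => ?_) (Set.Ioi_infinite (0:ℝ))
    have hl : (0:ℝ) < l := hl
    simp only [Set.mem_setOf_eq, Polynomial.eval_mul, Polynomial.eval_X, Polynomial.eval_smul,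
      smul_eq_mul]
    rw [hderiv_eq l hl, hevalpos x₀ l hl]
    have hlm : l ^ m = l ^ (m - 1) * l := by
      rw [← Real.rpow_add_one hl.ne']
      ring_nf
    rw [hlm]
    ring
  have hpne : p ≠ 0 := by
    intro h
    have h1 := hevalpos x₀ 1 one_pos
    rw [← hp, h] at h1
    simp only [Polynomial.eval_zero, Real.one_rpow, one_mul] at h1
    exact hx₀ h1.symm
  obtain ⟨k, hk⟩ : ∃ k, p.coeff k ≠ 0 := by
    by_contra h
    push_neg at h
    exact hpne (Polynomial.ext fun j => by rw [h j, Polynomial.coeff_zero])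
  have hcoeff : ∀ j : ℕ, (j : ℝ) * p.coeff j = m * p.coeff j := by
    intro j
    have hj := congrArg (fun r => Polynomial.coeff r j) hpoly_id
    simp only [Polynomial.coeff_smul, smul_eq_mul] at hj
    cases j with
    | zero =>
      rw [Polynomial.mul_coeff_zero, Polynomial.coeff_X_zero, zero_mul] at hj
      rw [Nat.cast_zero, zero_mul]
      exact hj
    | succ j =>
      rw [Polynomial.coeff_X_mul, Polynomial.coeff_derivative] at hj
      push_cast
      push_cast at hj
      linarith
  have hmk : m = (k : ℝ) := (mul_right_cancel₀ hk (hcoeff k)).symm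
  refine ⟨k, hmk, fun α hα => ?_⟩
  by_contra hne
  set d := ∑ i, α i * σ i with hd
  have hWx : ∀ x, W x = Polynomial.C (f x) * Polynomial.X ^ k := by
    intro x
    apply Polynomial.eq_of_infinite_eval_eq
    refine Set.Infinite.mono (fun l hl => ?_) (Set.Ioi_infinite (0:ℝ))
    have hl : (0:ℝ) < l := hl
    simp only [Set.mem_setOf_eq, Polynomial.eval_mul, Polynomial.eval_C, Polynomial.eval_pow,
      Polynomial.eval_X]
    rw [hevalpos x l hl, hmk, Real.rpow_natCast, mul_comm]
  have hslice : (∑ β ∈ Q.support.filter (fun β => (∑ j, β j * σ j) = d),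
      MvPolynomial.monomial β (MvPolynomial.coeff β Q)) = 0 := by
    apply MvPolynomial.funext
    intro x
    have h2 : (W x).coeff d = ∑ α ∈ Q.support.filter (fun α => (∑ j, α j * σ j) = d),
        MvPolynomial.coeff α Q * ∏ j, x j ^ α j := coeff_toOneW (σ := σ) x Q d
    rw [hWx x, Polynomial.coeff_C_mul, Polynomial.coeff_X_pow,
      if_neg (fun hh : d = k => hne (hd ▸ hh)), mul_zero] at h2
    rw [map_sum, map_zero]
    simp only [MvPolynomial.eval_monomial, Finsupp.prod_pow]
    exact h2.symm
  have hc : MvPolynomial.coeff α (∑ β ∈ Q.support.filter (fun β => (∑ j, β j * σ j) = d),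
      MvPolynomial.monomial β (MvPolynomial.coeff β Q)) = MvPolynomial.coeff α Q := by
    rw [MvPolynomial.coeff_sum]
    have hmem : α ∈ Q.support.filter (fun β => (∑ j, β j * σ j) = d) := by
      rw [Finset.mem_filter]
      exact ⟨hα, rfl⟩
    rw [Finset.sum_eq_single α]
    · rw [MvPolynomial.coeff_monomial, if_pos rfl]
    · intro β _ hβ
      rw [MvPolynomial.coeff_monomial, if_neg hβ]
    · intro h
      exact absurd hmem h
  rw [hslice, MvPolynomial.coeff_zero] at hc
  exact MvPolynomial.mem_support_iff.mp hα hc.symm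

end
end DilHomAux

/-- A smooth not identically vanishing function is `δ_λ`-homogeneous of degree `m` iff
it is a polynomial all of whose monomials `x^α` have `|α|_σ = m`.  Consequently the degree
is of the form `|α|_σ` for some multi-index `α`, and it is `0` iff the function is constant. -/
theorem smooth_dilHomogeneous_iff_polynomial
    (n : ℕ) (hn : 1 ≤ n) (σ : Fin n → ℕ) (hσpos : ∀ i, 0 < σ i)
    (hσmono : ∀ i j : Fin n, i ≤ j → σ i ≤ σ j)
    (a : (Fin n → ℝ) → ℝ) (ha : ContDiff ℝ (⊤ : ℕ∞) a) (hane : a ≠ 0) (m : ℝ) :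
    (IsDilHomogeneous n σ a m ↔
      ∃ c : (Fin n → ℕ) →₀ ℝ,
        (∀ x : Fin n → ℝ, a x = ∑ α ∈ c.support, c α * ∏ i, x i ^ α i) ∧
        ∀ α ∈ c.support, ((∑ i, α i * σ i : ℕ) : ℝ) = m) ∧
    (IsDilHomogeneous n σ a m →
      (∃ α : Fin n → ℕ, m = ((∑ i, α i * σ i : ℕ) : ℝ)) ∧
      (m = 0 ↔ ∃ cst : ℝ, a = fun _ => cst)) := by
  classical
  -- the key forward construction
  have key : IsDilHomogeneous n σ a m →
      ∃ c : (Fin n → ℕ) →₀ ℝ,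
        (∀ x : Fin n → ℝ, a x = ∑ α ∈ c.support, c α * ∏ i, x i ^ α i) ∧
        ∀ α ∈ c.support, ((∑ i, α i * σ i : ℕ) : ℝ) = m := by
    intro hhom
    obtain ⟨Q, hQ⟩ := DilHomAux.poly_of_hom hσpos ⌈m⌉₊ a ha m (Nat.le_ceil m) hhom
    obtain ⟨x₀, hx₀⟩ : ∃ x₀, a x₀ ≠ 0 := by
      by_contra h
      push_neg at h
      exact hane (funext h)
    obtain ⟨k, hmk, hwk⟩ := DilHomAux.hom_poly_weights hσpos Q hQ hhom x₀ hx₀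
    set e : (Fin n →₀ ℕ) ≃ (Fin n → ℕ) := Finsupp.equivFunOnFinite with he
    refine ⟨Finsupp.equivMapDomain e (AddMonoidAlgebra.coeff Q), ?_, ?_⟩
    · intro x
      have hsupp : (Finsupp.equivMapDomain e (AddMonoidAlgebra.coeff Q)).support = Q.support.map e.toEmbedding := rfl
      rw [hsupp, Finset.sum_map, hQ x, MvPolynomial.eval_eq']
      refine Finset.sum_congr rfl fun β _ => ?_
      congr 1
      simp only [Finsupp.equivMapDomain_apply, Equiv.toEmbedding_apply,
        Equiv.symm_apply_apply]
      rfl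
    · intro α hα
      have hsupp : (Finsupp.equivMapDomain e (AddMonoidAlgebra.coeff Q)).support = Q.support.map e.toEmbedding := rfl
      rw [hsupp, Finset.mem_map] at hα
      obtain ⟨β, hβ, hβα⟩ := hα
      have hcoord : ∀ i, α i = β i := by
        intro i
        rw [← hβα]
        rfl
      have : (∑ i, α i * σ i) = (∑ i, β i * σ i) := by
        refine Finset.sum_congr rfl fun i _ => ?_
        rw [hcoord i]
      rw [this, hwk β hβ, hmk]
  constructor
  · constructor
    · exact key
    · rintro ⟨c, hrep, hw⟩ l hl x
      rw [hrep, hrep, Finset.mul_sum]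
      refine Finset.sum_congr rfl fun α hα => ?_
      have hprod : ∏ i, (l ^ σ i * x i) ^ α i
          = l ^ ((∑ i, α i * σ i : ℕ)) * ∏ i, x i ^ α i := by
        rw [← Finset.prod_pow_eq_pow_sum, ← Finset.prod_mul_distrib]
        refine Finset.prod_congr rfl fun i _ => ?_
        rw [mul_pow, ← pow_mul']
      rw [hprod]
      have hlm : (l:ℝ) ^ ((∑ i, α i * σ i : ℕ)) = l ^ m := by
        rw [← Real.rpow_natCast l, hw α hα]
      rw [hlm]
      ring
  · intro hhom
    obtain ⟨c, hrep, hw⟩ := key hhom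
    constructor
    · have hsupp : c.support.Nonempty := by
        rcases Finset.eq_empty_or_nonempty c.support with h | h
        · exfalso
          apply hane
          funext x
          rw [hrep x, h, Finset.sum_empty]
          rfl
        · exact h
      obtain ⟨α, hα⟩ := hsupp
      exact ⟨α, (hw α hα).symm⟩
    · constructor
      · intro hm0
        exact ⟨a 0, funext fun x =>
          DilHomAux.hom_zero_const hσpos ha.continuous (hm0 ▸ hhom) x⟩
      · rintro ⟨cst, hcst⟩
        have hcne : cst ≠ 0 := by
          intro h
          apply hane
          rw [hcst, h]
          rfl
        have h2 : cst = (2:ℝ) ^ m * cst := by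
          have := hhom 2 (by norm_num) 0
          rw [hcst] at this
          simpa using this
        have h3 : (2:ℝ) ^ m = 1 := by
          have h4 : ((2:ℝ) ^ m - 1) * cst = 0 := by linarith
          rcases mul_eq_zero.mp h4 with h | h
          · linarith
          · exact absurd h hcne
        have h4 := congrArg Real.log h3
        rw [Real.log_rpow (by norm_num), Real.log_one] at h4
        have h5 := Real.log_pos (by norm_num : (1:ℝ) < 2)
        rcases mul_eq_zero.mp h4 with h | h
        · exact h
        · linarith
end

section
/- Let a : ℝⁿ → ℝ be a smooth (C^∞) function, not identically zero, which is δ_λ-homogeneous of degree m ∈ ℝ. Then m ≥ 0, and for every multi-index α ∈ ℕⁿ with |α|_σ > m the iterated partial derivative D^α a vanishes identically on ℝⁿ. -/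
open Real Finset

/-- The partial derivative `∂_{x_i}` of a function on `ℝⁿ`. -/
noncomputable def pderiv' (n : ℕ) (i : Fin n) (f : (Fin n → ℝ) → ℝ) : (Fin n → ℝ) → ℝ :=
  fun x => fderiv ℝ f x (Pi.single i 1)

/-- The iterated partial derivative `D^α = ∂_{x_1}^{α_1} ⋯ ∂_{x_n}^{α_n}`. -/
noncomputable def mderiv (n : ℕ) (α : Fin n → ℕ) (f : (Fin n → ℝ) → ℝ) : (Fin n → ℝ) → ℝ :=
  (List.finRange n).foldr (fun i g => (pderiv' n i)^[α i] g) f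

section Aux

variable {n : ℕ} {σ : Fin n → ℕ}

/-- The anisotropic dilation as a continuous linear map. -/
noncomputable def dilMap (n : ℕ) (σ : Fin n → ℕ) (l : ℝ) : (Fin n → ℝ) →L[ℝ] (Fin n → ℝ) :=
  ContinuousLinearMap.pi (fun i => (l ^ σ i) • ContinuousLinearMap.proj i)

lemma dilMap_apply (l : ℝ) (x : Fin n → ℝ) :
    dilMap n σ l x = fun i => l ^ σ i * x i := by
  funext i
  simp [dilMap]

/-- A continuous homogeneous function of negative degree vanishes identically. -/
lemma vanish_of_neg_degree (hσpos : ∀ i, 0 < σ i) (g : (Fin n → ℝ) → ℝ)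
    (hg : Continuous g) (μ : ℝ) (hμ : μ < 0)
    (hh : IsDilHomogeneous n σ g μ) : g = fun _ => 0 := by
  funext x
  have h1 : Filter.Tendsto (fun l : ℝ => l ^ (-μ) * g (fun i => l ^ σ i * x i))
      (nhdsWithin 0 (Set.Ioi 0)) (nhds (0 * g 0)) := by
    apply Filter.Tendsto.mul
    · have hc : ContinuousAt (fun t : ℝ => t ^ (-μ)) 0 :=
        Real.continuousAt_rpow_const 0 (-μ) (Or.inr (by linarith))
      have := hc.tendsto
      rw [Real.zero_rpow (by linarith : (-μ) ≠ 0)] at this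
      exact this.mono_left nhdsWithin_le_nhds
    · have hc : Continuous (fun l : ℝ => fun i => l ^ σ i * x i) := by
        apply continuous_pi
        intro i
        exact (continuous_pow (σ i)).mul continuous_const
      have h0 : (fun i => (0:ℝ) ^ σ i * x i) = (0 : Fin n → ℝ) := by
        funext i
        simp [zero_pow (hσpos i).ne']
      have := (hg.comp hc).tendsto 0
      simp only [Function.comp] at this
      rw [h0] at this
      exact this.mono_left nhdsWithin_le_nhds
  have h2 : ∀ᶠ l in nhdsWithin (0:ℝ) (Set.Ioi 0),
      l ^ (-μ) * g (fun i => l ^ σ i * x i) = g x := by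
    filter_upwards [self_mem_nhdsWithin] with l hl
    have hl' : (0:ℝ) < l := hl
    rw [hh l hl' x, ← mul_assoc, ← Real.rpow_add hl']
    simp
  have h3 : Filter.Tendsto (fun _ : ℝ => g x)
      (nhdsWithin 0 (Set.Ioi 0)) (nhds (0 * g 0)) := h1.congr' h2
  have h4 : Filter.Tendsto (fun _ : ℝ => g x)
      (nhdsWithin (0:ℝ) (Set.Ioi 0)) (nhds (g x)) := tendsto_const_nhds
  have := tendsto_nhds_unique h4 h3
  simpa using this

/-- Partial derivative of a homogeneous function is homogeneous of lower degree. -/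
lemma pderiv_hom (f : (Fin n → ℝ) → ℝ) (hf : ContDiff ℝ (⊤ : ℕ∞) f) (μ : ℝ)
    (hh : IsDilHomogeneous n σ f μ) (i : Fin n) :
    IsDilHomogeneous n σ (pderiv' n i f) (μ - σ i) := by
  intro l hl x
  have hdf : Differentiable ℝ f := hf.differentiable (by simp)
  have hL : HasFDerivAt (fun y => f (dilMap n σ l y))
      ((fderiv ℝ f (dilMap n σ l x)).comp (dilMap n σ l)) x :=
    (hdf (dilMap n σ l x)).hasFDerivAt.comp x (dilMap n σ l).hasFDerivAt
  have heq : (fun y => f (dilMap n σ l y)) = (fun y => l ^ μ * f y) := by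
    funext y
    rw [dilMap_apply, hh l hl y]
  rw [heq] at hL
  have hR : HasFDerivAt (fun y => l ^ μ * f y) ((l ^ μ) • fderiv ℝ f x) x :=
    (hdf x).hasFDerivAt.const_mul (l ^ μ)
  have huniq := hL.unique hR
  have happ := congrArg (fun T => T (Pi.single i 1)) huniq
  simp only [ContinuousLinearMap.comp_apply, ContinuousLinearMap.smul_apply,
    smul_eq_mul] at happ
  have hsing : dilMap n σ l (Pi.single i 1) = (l ^ σ i) • (Pi.single i 1 : Fin n → ℝ) := by
    funext j
    rw [dilMap_apply]
    by_cases h : j = i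
    · subst h; simp
    · simp [Pi.single_apply, h]
  rw [hsing, (fderiv ℝ f (dilMap n σ l x)).map_smul, smul_eq_mul] at happ
  have hlpow : (0:ℝ) < l ^ σ i := pow_pos hl _
  have hgoal : pderiv' n i f (fun j => l ^ σ j * x j) =
      l ^ (μ - (σ i : ℝ)) * pderiv' n i f x := by
    have hd : pderiv' n i f (dilMap n σ l x) = l ^ μ / l ^ σ i * pderiv' n i f x := by
      rw [div_mul_eq_mul_div, eq_div_iff hlpow.ne']
      simp only [pderiv']
      linarith [happ]
    rw [dilMap_apply] at hd
    rw [hd, Real.rpow_sub hl, Real.rpow_natCast]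
  exact hgoal

lemma iter_hom (hσpos : ∀ i, 0 < σ i) (i : Fin n) (k : ℕ) :
    ∀ (f : (Fin n → ℝ) → ℝ), ContDiff ℝ (⊤ : ℕ∞) f → ∀ μ : ℝ, IsDilHomogeneous n σ f μ →
    ContDiff ℝ (⊤ : ℕ∞) ((pderiv' n i)^[k] f) ∧
      IsDilHomogeneous n σ ((pderiv' n i)^[k] f) (μ - (k * σ i : ℕ)) := by
  induction k with
  | zero => intro f hf μ hh; simpa using ⟨hf, hh⟩
  | succ k ih =>
    intro f hf μ hh
    obtain ⟨hf', hh'⟩ := ih f hf μ hh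
    have hsmooth : ContDiff ℝ (⊤ : ℕ∞) (pderiv' n i ((pderiv' n i)^[k] f)) := by
      unfold pderiv'
      exact (hf'.fderiv_right (by simp)).clm_apply contDiff_const
    have hhom := pderiv_hom _ hf' _ hh' i
    rw [Function.iterate_succ_apply']
    refine ⟨hsmooth, ?_⟩
    convert hhom using 1
    push_cast
    ring

lemma foldr_hom (hσpos : ∀ i, 0 < σ i) (α : Fin n → ℕ) :
    ∀ (L : List (Fin n)) (f : (Fin n → ℝ) → ℝ), ContDiff ℝ (⊤ : ℕ∞) f →
    ∀ μ : ℝ, IsDilHomogeneous n σ f μ →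
    ContDiff ℝ (⊤ : ℕ∞) (L.foldr (fun i g => (pderiv' n i)^[α i] g) f) ∧
      IsDilHomogeneous n σ (L.foldr (fun i g => (pderiv' n i)^[α i] g) f)
        (μ - ((L.map (fun i => α i * σ i)).sum : ℕ)) := by
  intro L
  induction L with
  | nil => intro f hf μ hh; simpa using ⟨hf, hh⟩
  | cons j L ih =>
    intro f hf μ hh
    obtain ⟨hf', hh'⟩ := ih f hf μ hh
    obtain ⟨hf'', hh''⟩ := iter_hom hσpos j (α j) _ hf' _ hh'
    refine ⟨hf'', ?_⟩
    convert hh'' using 1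
    · rfl
    rw [List.map_cons, List.sum_cons]
    push_cast
    ring

end Aux

/-- A smooth, not identically vanishing, `δ_λ`-homogeneous function of degree `m` has `m ≥ 0`,
and `D^α a ≡ 0` whenever `|α|_σ > m`. -/
theorem dilHomogeneous_nonneg_degree_and_high_derivatives_vanish
    (n : ℕ) (hn : 1 ≤ n) (σ : Fin n → ℕ) (hσpos : ∀ i, 0 < σ i)
    (hσmono : ∀ i j : Fin n, i ≤ j → σ i ≤ σ j)
    (a : (Fin n → ℝ) → ℝ) (ha : ContDiff ℝ (⊤ : ℕ∞) a) (hane : a ≠ 0) (m : ℝ)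
    (hhom : IsDilHomogeneous n σ a m) :
    0 ≤ m ∧ ∀ α : Fin n → ℕ, m < ((∑ i, α i * σ i : ℕ) : ℝ) →
      mderiv n α a = fun _ => 0 := by
  constructor
  · by_contra hm
    push_neg at hm
    apply hane
    have := vanish_of_neg_degree hσpos a ha.continuous m hm hhom
    funext x
    rw [this]
    rfl
  · intro α hα
    obtain ⟨hsm, hh⟩ := foldr_hom hσpos α (List.finRange n) a ha m hhom
    have hsum : ((List.finRange n).map (fun i => α i * σ i)).sum = ∑ i, α i * σ i := by
      rw [Fin.sum_univ_def]
    rw [hsum] at hh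
    have hneg : m - ((∑ i, α i * σ i : ℕ) : ℝ) < 0 := by linarith
    exact vanish_of_neg_degree hσpos _ hsm.continuous _ hneg hh
end

section
/- Let X = Σ_{j=1}^n a_j(x) ∂_{x_j} be a vector field on ℝⁿ with smooth coefficients a_j : ℝⁿ → ℝ, not all identically zero, and let k ∈ ℝ. Then X is δ_λ-homogeneous of degree k — meaning that Σ_j a_j(x) ∂_{x_j}(φ ∘ δ_λ)(x) = λ^k Σ_j a_j(δ_λ(x)) (∂_{x_j}φ)(δ_λ(x)) for all φ ∈ C^∞(ℝⁿ), all x ∈ ℝⁿ and all λ > 0 — if and only if for every j = 1,…,n the coefficient a_j is either identically zero or a polynomial function that is δ_λ-homogeneous of degree σ_j − k. In particular, for every j with a_j not identically zero, k ≤ σ_j and k = σ_j − |α|_σ for some α ∈ ℕⁿ. -/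
open Real Finset

/-- The vector field `X = Σ_j a_j(x) ∂_{x_j}` is `δ_λ`-homogeneous of degree `k`:
for every smooth `φ`, every `x` and every `λ > 0`,
`X(φ ∘ δ_λ)(x) = λ^k Σ_j a_j(δ_λ(x)) (∂_{x_j}φ)(δ_λ(x))`. -/
def IsDilHomogeneousVF (n : ℕ) (σ : Fin n → ℕ) (a : Fin n → (Fin n → ℝ) → ℝ) (k : ℝ) : Prop :=
  ∀ φ : (Fin n → ℝ) → ℝ, ContDiff ℝ (⊤ : ℕ∞) φ → ∀ x : Fin n → ℝ, ∀ l : ℝ, 0 < l →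
    ∑ j, a j x * fderiv ℝ (fun y => φ (fun i => l ^ σ i * y i)) x (Pi.single j 1) =
      l ^ k * ∑ j, a j (fun i => l ^ σ i * x i) *
        fderiv ℝ φ (fun i => l ^ σ i * x i) (Pi.single j 1)

noncomputable def dilL (n : ℕ) (σ : Fin n → ℕ) (l : ℝ) : (Fin n → ℝ) →L[ℝ] (Fin n → ℝ) :=
  ContinuousLinearMap.pi (fun i => (l ^ σ i) • ContinuousLinearMap.proj i)

lemma dilL_apply (n : ℕ) (σ : Fin n → ℕ) (l : ℝ) (x : Fin n → ℝ) :
    dilL n σ l x = fun i => l ^ σ i * x i := by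
  funext i; simp [dilL]

lemma dilL_single (n : ℕ) (σ : Fin n → ℕ) (l : ℝ) (j : Fin n) :
    dilL n σ l (Pi.single j 1) = (l ^ σ j) • (Pi.single j 1 : Fin n → ℝ) := by
  rw [dilL_apply]
  funext i
  rcases eq_or_ne i j with rfl | h
  · simp
  · simp [Pi.single_eq_of_ne h]

/-- evaluation of a CLM on a vector as sum over the basis -/
lemma clm_eval_sum (n : ℕ) (f : (Fin n → ℝ) →L[ℝ] ℝ) (v : Fin n → ℝ) :
    f v = ∑ i, v i * f (Pi.single i 1) := by
  have hv : v = ∑ i, v i • (Pi.single i 1 : Fin n → ℝ) := by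
    funext j
    rw [Finset.sum_apply]
    simp [Pi.single_apply]
  conv_lhs => rw [hv]
  rw [map_sum]
  simp [smul_eq_mul]

lemma fderiv_comp_dil (n : ℕ) (σ : Fin n → ℕ) (l : ℝ) (a : (Fin n → ℝ) → ℝ)
    (ha : Differentiable ℝ a) (x : Fin n → ℝ) (j : Fin n) :
    fderiv ℝ (fun y => a (fun i => l ^ σ i * y i)) x (Pi.single j 1)
      = l ^ σ j * fderiv ℝ a (fun i => l ^ σ i * x i) (Pi.single j 1) := by
  have h0 : (fun y => a (fun i => l ^ σ i * y i)) = a ∘ ⇑(dilL n σ l) := by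
    funext y; simp [dilL_apply]
  have h1 : HasFDerivAt (a ∘ ⇑(dilL n σ l))
      ((fderiv ℝ a (dilL n σ l x)).comp (dilL n σ l)) x :=
    ((ha (dilL n σ l x)).hasFDerivAt).comp x (dilL n σ l).hasFDerivAt
  rw [h0, h1.fderiv]
  rw [ContinuousLinearMap.comp_apply, dilL_single, map_smul, dilL_apply]
  simp [smul_eq_mul]

/-- partial derivatives of a homogeneous function are homogeneous -/
lemma pd_hom (n : ℕ) (σ : Fin n → ℕ) (a : (Fin n → ℝ) → ℝ) (ha : Differentiable ℝ a)
    (m : ℝ) (hhom : IsDilHomogeneous n σ a m) (j : Fin n) :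
    IsDilHomogeneous n σ (fun x => fderiv ℝ a x (Pi.single j 1)) ((m : ℝ) - σ j) := by
  intro l hl x
  have hfun : (fun y => a (fun i => l ^ σ i * y i)) = fun y => l ^ m * a y := by
    funext y; exact hhom l hl y
  have h1 := fderiv_comp_dil n σ l a ha x j
  rw [hfun] at h1
  have h2 : fderiv ℝ (fun y => l ^ m * a y) x = (l ^ m) • fderiv ℝ a x :=
    fderiv_const_mul (ha x) _
  rw [h2] at h1
  simp only [ContinuousLinearMap.smul_apply, smul_eq_mul] at h1
  have hln : (0:ℝ) < l ^ σ j := pow_pos hl _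
  rw [Real.rpow_sub hl, Real.rpow_natCast]
  rw [div_mul_eq_mul_div, eq_div_iff hln.ne']
  linear_combination -h1

/-- a continuous function homogeneous of negative degree vanishes -/
lemma hom_tendsto_zero (n : ℕ) (σ : Fin n → ℕ) (hσpos : ∀ i, 0 < σ i)
    (a : (Fin n → ℝ) → ℝ) (hc : Continuous a) (x : Fin n → ℝ) :
    Filter.Tendsto (fun l : ℝ => a (fun i => l ^ σ i * x i)) (nhdsWithin 0 (Set.Ioi 0)) (nhds (a 0)) := by
  have hcont : Continuous (fun l : ℝ => a (fun i => l ^ σ i * x i)) :=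
    hc.comp (continuous_pi fun i => (continuous_pow _).mul continuous_const)
  have h0 : (fun i => (0:ℝ) ^ σ i * x i) = (0 : Fin n → ℝ) := by
    funext i; simp [zero_pow (hσpos i).ne']
  have := hcont.tendsto 0
  rw [h0] at this
  exact this.mono_left nhdsWithin_le_nhds

lemma hom_neg_eq_zero (n : ℕ) (σ : Fin n → ℕ) (hσpos : ∀ i, 0 < σ i)
    (a : (Fin n → ℝ) → ℝ) (hc : Continuous a) (m : ℝ) (hm : m < 0)
    (hhom : IsDilHomogeneous n σ a m) : a = 0 := by
  funext x
  have t1 : Filter.Tendsto (fun l : ℝ => l ^ (-m)) (nhdsWithin 0 (Set.Ioi 0)) (nhds 0) := by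
    have hct : ContinuousAt (fun l : ℝ => l ^ (-m)) 0 :=
      Real.continuousAt_rpow_const 0 (-m) (Or.inr (by linarith))
    have := hct.tendsto
    rw [Real.zero_rpow (by linarith : -m ≠ 0)] at this
    exact this.mono_left nhdsWithin_le_nhds
  have t2 := hom_tendsto_zero n σ hσpos a hc x
  have t3 : Filter.Tendsto (fun l : ℝ => l ^ (-m) * a (fun i => l ^ σ i * x i))
      (nhdsWithin 0 (Set.Ioi 0)) (nhds (0 * a 0)) := t1.mul t2
  have hEq : ∀ l ∈ Set.Ioi (0:ℝ), l ^ (-m) * a (fun i => l ^ σ i * x i) = a x := by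
    intro l hl
    rw [hhom l hl x, ← mul_assoc, ← Real.rpow_add hl]
    simp
  have t4 : Filter.Tendsto (fun _ : ℝ => a x) (nhdsWithin 0 (Set.Ioi 0)) (nhds (0 * a 0)) := by
    refine t3.congr' ?_
    filter_upwards [self_mem_nhdsWithin] with l hl using hEq l hl
  have := tendsto_nhds_unique t4 tendsto_const_nhds
  simpa using this.symm

lemma hom_zero_const (n : ℕ) (σ : Fin n → ℕ) (hσpos : ∀ i, 0 < σ i)
    (a : (Fin n → ℝ) → ℝ) (hc : Continuous a)
    (hhom : IsDilHomogeneous n σ a 0) : ∀ x, a x = a 0 := by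
  intro x
  have t2 := hom_tendsto_zero n σ hσpos a hc x
  have t4 : Filter.Tendsto (fun _ : ℝ => a x) (nhdsWithin 0 (Set.Ioi 0)) (nhds (a 0)) := by
    refine t2.congr' ?_
    filter_upwards [self_mem_nhdsWithin] with l hl
    rw [hhom l hl x]; simp
  exact (tendsto_nhds_unique t4 tendsto_const_nhds).symm

/-- Euler's identity -/
lemma euler (n : ℕ) (σ : Fin n → ℕ) (a : (Fin n → ℝ) → ℝ) (ha : ContDiff ℝ (⊤ : ℕ∞) a)
    (m : ℝ) (hhom : IsDilHomogeneous n σ a m) (x : Fin n → ℝ) :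
    m * a x = ∑ i, ((σ i : ℝ) * x i) * fderiv ℝ a x (Pi.single i 1) := by
  set g : ℝ → (Fin n → ℝ) := fun l => fun i => l ^ σ i * x i with hg_def
  have hg : HasDerivAt g (fun i => (σ i : ℝ) * x i) 1 := by
    rw [hasDerivAt_pi]
    intro i
    simpa using (hasDerivAt_pow (σ i) 1).mul_const (x i)
  have hg1 : g 1 = x := by funext i; simp [hg_def]
  have hF : HasDerivAt (fun l => a (g l)) (fderiv ℝ a x (fun i => (σ i : ℝ) * x i)) 1 := by
    have h := ((ha.differentiable (by simp) (g 1)).hasFDerivAt).comp_hasDerivAt 1 hg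
    rw [hg1] at h
    exact h
  have hG : HasDerivAt (fun l : ℝ => l ^ m * a x) (m * a x) 1 := by
    have := (Real.hasDerivAt_rpow_const (x := 1) (p := m) (Or.inl one_ne_zero)).mul_const (a x)
    simpa using this
  have hEv : (fun l : ℝ => l ^ m * a x) =ᶠ[nhds 1] fun l => a (g l) := by
    filter_upwards [eventually_gt_nhds zero_lt_one] with l hl
    exact (hhom l hl x).symm
  have hF' : HasDerivAt (fun l : ℝ => l ^ m * a x) (fderiv ℝ a x (fun i => (σ i : ℝ) * x i)) 1 :=
    hF.congr_of_eventuallyEq hEv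
  have := hF'.unique hG
  rw [← this, clm_eval_sum]

/-- conversion from MvPolynomial to the Finsupp representation -/
lemma mv_to_finsupp (n : ℕ) (p : MvPolynomial (Fin n) ℝ) :
    ∃ c : (Fin n → ℕ) →₀ ℝ, ∀ x : Fin n → ℝ,
      MvPolynomial.eval x p = ∑ α ∈ c.support, c α * ∏ i, x i ^ α i := by
  refine ⟨Finsupp.equivMapDomain Finsupp.equivFunOnFinite (AddMonoidAlgebra.coeff p), fun x => ?_⟩
  have h1 : ∑ α ∈ (Finsupp.equivMapDomain Finsupp.equivFunOnFinite (AddMonoidAlgebra.coeff p)).support,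
        (Finsupp.equivMapDomain Finsupp.equivFunOnFinite (AddMonoidAlgebra.coeff p)) α * ∏ i, x i ^ α i
      = (Finsupp.equivMapDomain Finsupp.equivFunOnFinite (AddMonoidAlgebra.coeff p)).sum
          (fun α v => v * ∏ i, x i ^ α i) := rfl
  rw [h1, Finsupp.sum_equivMapDomain]
  rw [MvPolynomial.eval_eq']
  rfl

/-- main induction: a smooth homogeneous function is polynomial, with admissible degree -/
lemma hom_smooth_poly (n : ℕ) (σ : Fin n → ℕ) (hσpos : ∀ i, 0 < σ i) :
    ∀ N : ℕ, ∀ m : ℝ, m < N → ∀ a : (Fin n → ℝ) → ℝ, ContDiff ℝ (⊤ : ℕ∞) a →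
      IsDilHomogeneous n σ a m →
      (∃ p : MvPolynomial (Fin n) ℝ, ∀ x, a x = MvPolynomial.eval x p) ∧
      (a ≠ 0 → ∃ α : Fin n → ℕ, m = ∑ i, (α i : ℝ) * σ i) := by
  intro N
  induction N with
  | zero =>
      intro m hm a ha hhom
      have hz : a = 0 := hom_neg_eq_zero n σ hσpos a (ha.continuous) m (by exact_mod_cast hm) hhom
      exact ⟨⟨0, by simp [hz]⟩, fun h => absurd hz h⟩
  | succ N ih =>
      intro m hm a ha hhom
      rcases lt_trichotomy m 0 with hm0 | hm0 | hm0
      · have hz : a = 0 := hom_neg_eq_zero n σ hσpos a (ha.continuous) m hm0 hhom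
        exact ⟨⟨0, by simp [hz]⟩, fun h => absurd hz h⟩
      · subst hm0
        have hconst := hom_zero_const n σ hσpos a (ha.continuous) hhom
        refine ⟨⟨MvPolynomial.C (a 0), fun x => by simp [hconst x]⟩, fun _ => ⟨0, by simp⟩⟩
      · -- positive degree
        set b : Fin n → (Fin n → ℝ) → ℝ := fun i x => fderiv ℝ a x (Pi.single i 1) with hb_def
        have hb_smooth : ∀ i, ContDiff ℝ (⊤ : ℕ∞) (b i) := fun i =>
          (ha.fderiv_right (by simp)).clm_apply contDiff_const
        have hb_hom : ∀ i, IsDilHomogeneous n σ (b i) (m - σ i) := fun i =>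
          pd_hom n σ a (ha.differentiable (by simp)) m hhom i
        have hlt : ∀ i, m - (σ i : ℝ) < N := by
          intro i
          have h1 : (1:ℝ) ≤ (σ i : ℝ) := by exact_mod_cast hσpos i
          have : m < (N:ℝ) + 1 := by exact_mod_cast hm
          linarith
        have IH := fun i => ih (m - σ i) (hlt i) (b i) (hb_smooth i) (hb_hom i)
        have hEuler : ∀ x, a x = m⁻¹ * ∑ i, ((σ i : ℝ) * x i) * b i x := by
          intro x
          rw [← euler n σ a ha m hhom x, ← mul_assoc, inv_mul_cancel₀ hm0.ne', one_mul]
        constructor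
        · choose p hp using fun i => (IH i).1
          refine ⟨MvPolynomial.C m⁻¹ *
            ∑ i, MvPolynomial.C (σ i : ℝ) * MvPolynomial.X i * p i, fun x => ?_⟩
          rw [hEuler x]
          simp only [map_mul, map_sum, MvPolynomial.eval_C, MvPolynomial.eval_X]
          congr 1
          refine Finset.sum_congr rfl fun i _ => ?_
          rw [← hp i x]
        · intro hane
          have hex : ∃ i, b i ≠ 0 := by
            by_contra h
            push_neg at h
            apply hane
            funext x
            have := hEuler x
            simp only [h, Pi.zero_apply, mul_zero, Finset.sum_const_zero] at this
            simpa using this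
          obtain ⟨i, hbi⟩ := hex
          obtain ⟨α, hα⟩ := (IH i).2 hbi
          refine ⟨fun j => α j + (if j = i then 1 else 0), ?_⟩
          have hsum : ∑ j, (((α j + (if j = i then 1 else 0)) : ℕ) : ℝ) * σ j
              = (∑ j, (α j : ℝ) * σ j) + σ i := by
            have hterm : ∀ j ∈ Finset.univ, (((α j + (if j = i then 1 else 0)) : ℕ) : ℝ) * σ j
                = (α j : ℝ) * σ j + (if j = i then (σ j : ℝ) else 0) := by
              intro j _; split <;> push_cast <;> ring
            rw [Finset.sum_congr rfl hterm, Finset.sum_add_distrib,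
              Finset.sum_ite_eq' Finset.univ i (fun j => (σ j : ℝ))]
            simp
          rw [hsum, ← hα]
          ring

lemma vf_to_scalar (n : ℕ) (σ : Fin n → ℕ) (a : Fin n → (Fin n → ℝ) → ℝ) (k : ℝ)
    (hVF : IsDilHomogeneousVF n σ a k) (j : Fin n) :
    IsDilHomogeneous n σ (a j) ((σ j : ℝ) - k) := by
  intro l hl x
  have hφ : ContDiff ℝ (⊤ : ℕ∞) (fun y : Fin n → ℝ => y j) :=
    (ContinuousLinearMap.proj j : (Fin n → ℝ) →L[ℝ] ℝ).contDiff
  have h := hVF (fun y => y j) hφ x l hl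
  have hfd : ∀ z : Fin n → ℝ, fderiv ℝ (fun y : Fin n → ℝ => y j) z
      = (ContinuousLinearMap.proj j : (Fin n → ℝ) →L[ℝ] ℝ) := fun z =>
    (ContinuousLinearMap.proj j : (Fin n → ℝ) →L[ℝ] ℝ).fderiv
  have hcomp : ∀ j' : Fin n, fderiv ℝ (fun y => (fun i => l ^ σ i * y i) j) x (Pi.single j' 1)
      = l ^ σ j' * (Pi.single j' 1 : Fin n → ℝ) j := by
    intro j'
    rw [fderiv_comp_dil n σ l (fun y : Fin n → ℝ => y j) (hφ.differentiable (by simp)) x j', hfd]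
    rfl
  simp only [hcomp, hfd] at h
  have hL : ∑ j', a j' x * (l ^ σ j' * (Pi.single j' 1 : Fin n → ℝ) j) = a j x * l ^ σ j := by
    rw [Finset.sum_eq_single j]
    · simp
    · intro j' _ hne
      simp [Pi.single_eq_of_ne (Ne.symm hne)]
    · simp
  have hR : ∑ j', a j' (fun i => l ^ σ i * x i) *
      (ContinuousLinearMap.proj j : (Fin n → ℝ) →L[ℝ] ℝ) (Pi.single j' 1)
      = a j (fun i => l ^ σ i * x i) := by
    rw [Finset.sum_eq_single j]
    · simp
    · intro j' _ hne
      simp [ContinuousLinearMap.proj_apply, Pi.single_eq_of_ne (Ne.symm hne)]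
    · simp
  rw [hL, hR] at h
  rw [Real.rpow_sub hl, Real.rpow_natCast, div_mul_eq_mul_div,
    eq_div_iff (Real.rpow_pos_of_pos hl k).ne']
  linear_combination -h

lemma scalar_to_vf (n : ℕ) (σ : Fin n → ℕ) (a : Fin n → (Fin n → ℝ) → ℝ)
    (k : ℝ) (H : ∀ j, IsDilHomogeneous n σ (a j) ((σ j : ℝ) - k)) :
    IsDilHomogeneousVF n σ a k := by
  intro φ hφ x l hl
  rw [Finset.mul_sum]
  refine Finset.sum_congr rfl fun j _ => ?_
  rw [fderiv_comp_dil n σ l φ (hφ.differentiable (by simp)) x j, H j l hl x]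
  rw [Real.rpow_sub hl, Real.rpow_natCast]
  have h0 : (l:ℝ) ^ k ≠ 0 := (Real.rpow_pos_of_pos hl k).ne'
  field_simp

/-- A smooth, not identically vanishing, vector field `X = Σ_j a_j ∂_{x_j}` is
`δ_λ`-homogeneous of degree `k` iff each coefficient `a_j` is either identically zero or a
polynomial function which is `δ_λ`-homogeneous of degree `σ_j − k`.  In particular, for every
`j` with `a_j ≢ 0` one has `k ≤ σ_j` and `k = σ_j − |α|_σ` for some multi-index `α`. -/
theorem dilHomogeneous_vectorField_iff
    (n : ℕ) (hn : 1 ≤ n) (σ : Fin n → ℕ) (hσpos : ∀ i, 0 < σ i)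
    (hσmono : ∀ i j : Fin n, i ≤ j → σ i ≤ σ j)
    (a : Fin n → (Fin n → ℝ) → ℝ) (ha : ∀ j, ContDiff ℝ (⊤ : ℕ∞) (a j))
    (hane : ∃ j, a j ≠ 0) (k : ℝ) :
    (IsDilHomogeneousVF n σ a k ↔
      ∀ j : Fin n, a j = 0 ∨
        ((∃ c : (Fin n → ℕ) →₀ ℝ,
            ∀ x : Fin n → ℝ, a j x = ∑ α ∈ c.support, c α * ∏ i, x i ^ α i) ∧
          IsDilHomogeneous n σ (a j) ((σ j : ℝ) - k))) ∧
    (IsDilHomogeneousVF n σ a k →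
      ∀ j : Fin n, a j ≠ 0 →
        k ≤ (σ j : ℝ) ∧ ∃ α : Fin n → ℕ, k = (σ j : ℝ) - ((∑ i, α i * σ i : ℕ) : ℝ)) := by
  constructor
  · constructor
    · intro hVF j
      by_cases hj : a j = 0
      · exact Or.inl hj
      · refine Or.inr ⟨?_, vf_to_scalar n σ a k hVF j⟩
        obtain ⟨N, hN⟩ := exists_nat_gt ((σ j : ℝ) - k)
        obtain ⟨⟨p, hp⟩, -⟩ :=
          hom_smooth_poly n σ hσpos N _ hN (a j) (ha j) (vf_to_scalar n σ a k hVF j)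
        obtain ⟨c, hc⟩ := mv_to_finsupp n p
        exact ⟨c, fun x => by rw [hp x, hc x]⟩
    · intro H
      apply scalar_to_vf n σ a k
      intro j
      rcases H j with h0 | ⟨-, hh⟩
      · intro l hl x; rw [h0]; simp
      · exact hh
  · intro hVF j hj
    have hhom := vf_to_scalar n σ a k hVF j
    obtain ⟨N, hN⟩ := exists_nat_gt ((σ j : ℝ) - k)
    obtain ⟨-, h2⟩ := hom_smooth_poly n σ hσpos N _ hN (a j) (ha j) hhom
    obtain ⟨α, hα⟩ := h2 hj
    have hcast : ((∑ i, α i * σ i : ℕ) : ℝ) = ∑ i, (α i : ℝ) * σ i := by push_cast; rfl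
    have hnn : (0:ℝ) ≤ ∑ i, (α i : ℝ) * σ i := Finset.sum_nonneg fun i _ => by positivity
    exact ⟨by linarith, ⟨α, by rw [hcast, ← hα]; ring⟩⟩
end

section
/- There exists a constant C > 0 such that for every (x,t) ∈ ℝ^{n₁}×ℝⁿ with (x,t) ≠ (0,0), |∇_G N_α(x,t)| ≥ C ‖x‖^{4α−1} / N_α(x,t)^{4α−1}, where ‖x‖ is the Euclidean norm on ℝ^{n₁}. In particular, since ‖x‖ ≥ |x_{j₀}| for every j₀ ∈ {1,…,n₁}, the quasi-norm N_α satisfies Condition (G) with γ = 4α and any index j₀ ∈ {1,…,n₁}. -/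
/-!
Pair the sub-gradient with `x`. Since every `B⁽ᵏ⁾` is skew-symmetric, `xᵀ B⁽ᵏ⁾ x = 0`, so the
vertical parts cancel and `Σ_j x_j X_j f = ∂_x f · x`. For `N_α`, differentiating along
`s ↦ ((1 + s) x, t)` gives `∂_x N_α · x = ‖x‖^{4α} / N_α^{4α-1}`, while Cauchy–Schwarz bounds
the left side by `‖x‖ |∇_G N_α|`. Dividing by `‖x‖` gives the bound with `C = 1`.
-/

open Real Finset Matrix MeasureTheory

/-- The generating vector fields `X_j` of a step-2 Carnot group on `ℝ^{n₁} × ℝⁿ` defined by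
skew-symmetric matrices `B⁽ᵏ⁾`:
`X_j f(x,t) = ∂_{x_j} f(x,t) + (1/2) Σ_k Σ_i B⁽ᵏ⁾_{ij} x_i ∂_{t_k} f(x,t)`. -/
noncomputable def Xvf {n₁ n : ℕ} (B : Fin n → Matrix (Fin n₁) (Fin n₁) ℝ) (j : Fin n₁)
    (f : (Fin n₁ → ℝ) × (Fin n → ℝ) → ℝ) (z : (Fin n₁ → ℝ) × (Fin n → ℝ)) : ℝ :=
  fderiv ℝ f z (Pi.single j 1, 0) +
    (1 / 2) * ∑ k : Fin n, (∑ i : Fin n₁, B k i j * z.1 i) * fderiv ℝ f z (0, Pi.single k 1)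

/-- The squared length of the sub-gradient: `|∇_G f|² = Σ_j (X_j f)²`. -/
noncomputable def gradSq {n₁ n : ℕ} (B : Fin n → Matrix (Fin n₁) (Fin n₁) ℝ)
    (f : (Fin n₁ → ℝ) × (Fin n → ℝ) → ℝ) (z : (Fin n₁ → ℝ) × (Fin n → ℝ)) : ℝ :=
  ∑ j : Fin n₁, (Xvf B j f z) ^ 2

/-- The length `|∇_G f|` of the sub-gradient. -/
noncomputable def gradLen {n₁ n : ℕ} (B : Fin n → Matrix (Fin n₁) (Fin n₁) ℝ)
    (f : (Fin n₁ → ℝ) × (Fin n → ℝ) → ℝ) (z : (Fin n₁ → ℝ) × (Fin n → ℝ)) : ℝ :=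
  Real.sqrt (gradSq B f z)

/-- The sub-Laplacian `Δ_G f = Σ_j X_j (X_j f)`. -/
noncomputable def subLap {n₁ n : ℕ} (B : Fin n → Matrix (Fin n₁) (Fin n₁) ℝ)
    (f : (Fin n₁ → ℝ) × (Fin n → ℝ) → ℝ) (z : (Fin n₁ → ℝ) × (Fin n → ℝ)) : ℝ :=
  ∑ j : Fin n₁, Xvf B j (Xvf B j f) z

/-- The dilations `δ_λ(x,t) = (λ x, λ² t)` of the step-2 group. -/
def dil2 {n₁ n : ℕ} (l : ℝ) (z : (Fin n₁ → ℝ) × (Fin n → ℝ)) :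
    (Fin n₁ → ℝ) × (Fin n → ℝ) :=
  (fun i => l * z.1 i, fun k => l ^ 2 * z.2 k)

/-- A homogeneous quasi-norm on the step-2 group: continuous, nonnegative, vanishing
exactly at the origin, and `N(δ_λ(z)) = λ N(z)` for all `λ > 0`. -/
def IsHomQuasiNorm2 {n₁ n : ℕ} (N : (Fin n₁ → ℝ) × (Fin n → ℝ) → ℝ) : Prop :=
  Continuous N ∧ (∀ z, 0 ≤ N z) ∧ (∀ z, N z = 0 ↔ z = 0) ∧
    ∀ l : ℝ, 0 < l → ∀ z, N (dil2 l z) = l * N z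

/-- The probability measure `μ_p = Z⁻¹ e^{−a N(z)^p} dz` on the step-2 group. -/
noncomputable def muP {n₁ n : ℕ} (N : (Fin n₁ → ℝ) × (Fin n → ℝ) → ℝ) (a p : ℝ) :
    Measure ((Fin n₁ → ℝ) × (Fin n → ℝ)) :=
  ((∫⁻ z, ENNReal.ofReal (Real.exp (-(a * N z ^ p))))⁻¹) •
    (volume.withDensity fun z => ENNReal.ofReal (Real.exp (-(a * N z ^ p))))

/-- The Euclidean norm `‖x‖ = (Σ_i x_i²)^{1/2}` on `ℝ^m`. -/
noncomputable def eucNorm {m : ℕ} (x : Fin m → ℝ) : ℝ :=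
  Real.sqrt (∑ i, x i ^ 2)

/-- The homogeneous quasi-norm `N_α(x,t) = (‖x‖^{4α} + Σ_j c_j t_j^{2α})^{1/(4α)}`. -/
noncomputable def Nalpha {n₁ n : ℕ} (α : ℕ) (c : Fin n → ℝ)
    (z : (Fin n₁ → ℝ) × (Fin n → ℝ)) : ℝ :=
  (eucNorm z.1 ^ (4 * α) + ∑ j, c j * z.2 j ^ (2 * α)) ^ ((1 : ℝ) / (4 * α : ℝ))

lemma Matrix.vecMul_dotProduct_self_eq_zero {m R : Type*} [Fintype m] [CommRing R]
    [NoZeroDivisors R] [CharZero R] {A : Matrix m m R} (hA : Aᵀ = -A) (x : m → R) :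
    x ᵥ* A ⬝ᵥ x = 0 := by
  refine self_eq_neg.mp ?_
  calc x ᵥ* A ⬝ᵥ x = x ⬝ᵥ A *ᵥ x := (dotProduct_mulVec x A x).symm
    _ = x ⬝ᵥ (-Aᵀ) *ᵥ x := by rw [hA, neg_neg]
    _ = -(x ᵥ* A ⬝ᵥ x) := by rw [neg_mulVec, dotProduct_neg, mulVec_transpose, dotProduct_comm]

section StepTwo

variable {n₁ n : ℕ}

lemma eucNorm_smul (a : ℝ) (x : Fin n₁ → ℝ) : eucNorm (a • x) = |a| * eucNorm x := by
  simp only [eucNorm, Pi.smul_apply, smul_eq_mul, mul_pow, ← Finset.mul_sum]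
  rw [Real.sqrt_mul (sq_nonneg a), Real.sqrt_sq_eq_abs]

lemma eucNorm_nonneg (x : Fin n₁ → ℝ) : 0 ≤ eucNorm x :=
  Real.sqrt_nonneg _

lemma abs_le_eucNorm (x : Fin n₁ → ℝ) (j : Fin n₁) : |x j| ≤ eucNorm x := by
  rw [eucNorm, ← Real.sqrt_sq_eq_abs]
  exact Real.sqrt_le_sqrt (Finset.single_le_sum (fun i _ => sq_nonneg (x i)) (Finset.mem_univ j))

lemma eucNorm_pos {x : Fin n₁ → ℝ} (hx : x ≠ 0) : 0 < eucNorm x := by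
  obtain ⟨j, hj⟩ := Function.ne_iff.mp hx
  exact (abs_pos.mpr hj).trans_le (abs_le_eucNorm x j)

lemma eucNorm_pow_four_mul (x : Fin n₁ → ℝ) (α : ℕ) :
    eucNorm x ^ (4 * α) = (∑ i, x i ^ 2) ^ (2 * α) := by
  rw [eucNorm, show 4 * α = 2 * (2 * α) by ring, pow_mul,
    Real.sq_sqrt (Finset.sum_nonneg fun i _ => sq_nonneg (x i))]

lemma sum_mul_Xvf_eq_fderiv {B : Fin n → Matrix (Fin n₁) (Fin n₁) ℝ}
    (hskew : ∀ k, (B k)ᵀ = -(B k)) (f : (Fin n₁ → ℝ) × (Fin n → ℝ) → ℝ)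
    (z : (Fin n₁ → ℝ) × (Fin n → ℝ)) :
    ∑ j, z.1 j * Xvf B j f z = fderiv ℝ f z (z.1, 0) := by
  have hdecomp : (z.1, (0 : Fin n → ℝ)) = ∑ j, z.1 j • (Pi.single j 1, 0) := by
    ext i <;> simp [Prod.fst_sum, Prod.snd_sum, Finset.sum_apply, Pi.single_apply]
  have hform : ∀ k, ∑ j, z.1 j * ∑ i, B k i j * z.1 i = 0 := fun k => by
    simpa [dotProduct, vecMul, mul_comm, Finset.mul_sum] using
      Matrix.vecMul_dotProduct_self_eq_zero (hskew k) z.1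
  have hvert : ∑ j, z.1 j * ((1 / 2) * ∑ k, (∑ i, B k i j * z.1 i) *
      fderiv ℝ f z (0, Pi.single k 1)) = 0 := by
    calc _ = ∑ k, (1 / 2 * fderiv ℝ f z (0, Pi.single k 1)) *
          ∑ j, z.1 j * ∑ i, B k i j * z.1 i := by
          simp only [Finset.mul_sum, Finset.sum_mul]
          rw [Finset.sum_comm]
          exact Finset.sum_congr rfl fun k _ => Finset.sum_congr rfl fun j _ =>
            Finset.sum_congr rfl fun i _ => by ring
      _ = 0 := by simp [hform]
  simp only [Xvf, mul_add, Finset.sum_add_distrib, hvert, add_zero]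
  rw [hdecomp, map_sum]
  simp only [map_smul, smul_eq_mul]

lemma fderiv_apply_fst_le_eucNorm_mul_gradLen {B : Fin n → Matrix (Fin n₁) (Fin n₁) ℝ}
    (hskew : ∀ k, (B k)ᵀ = -(B k)) (f : (Fin n₁ → ℝ) × (Fin n → ℝ) → ℝ)
    (z : (Fin n₁ → ℝ) × (Fin n → ℝ)) :
    fderiv ℝ f z (z.1, 0) ≤ eucNorm z.1 * gradLen B f z := by
  rw [← sum_mul_Xvf_eq_fderiv hskew]
  exact Real.sum_mul_le_sqrt_mul_sqrt _ _ _

variable {α : ℕ} {c : Fin n → ℝ}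

lemma sum_mul_pow_two_mul_nonneg (hc : ∀ j, 0 ≤ c j) (t : Fin n → ℝ) :
    0 ≤ ∑ j, c j * t j ^ (2 * α) :=
  Finset.sum_nonneg fun j _ => mul_nonneg (hc j) ((even_two_mul α).pow_nonneg _)

lemma Nalpha_nonneg (hc : ∀ j, 0 ≤ c j) (z : (Fin n₁ → ℝ) × (Fin n → ℝ)) :
    0 ≤ Nalpha α c z :=
  Real.rpow_nonneg
    (add_nonneg (pow_nonneg (eucNorm_nonneg _) _) (sum_mul_pow_two_mul_nonneg hc z.2)) _

lemma Nalpha_pow_four_mul (hα : 0 < α) (hc : ∀ j, 0 ≤ c j) (z : (Fin n₁ → ℝ) × (Fin n → ℝ)) :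
    Nalpha α c z ^ (4 * α) = eucNorm z.1 ^ (4 * α) + ∑ j, c j * z.2 j ^ (2 * α) := by
  rw [Nalpha, one_div, show (4 * α : ℝ) = ((4 * α : ℕ) : ℝ) by push_cast; rfl]
  exact Real.rpow_inv_natCast_pow
    (add_nonneg (pow_nonneg (eucNorm_nonneg z.1) _) (sum_mul_pow_two_mul_nonneg hc z.2))
    (by omega)

lemma Nalpha_pos (hα : 0 < α) (hc : ∀ j, 0 ≤ c j) {z : (Fin n₁ → ℝ) × (Fin n → ℝ)}
    (hz : z.1 ≠ 0) : 0 < Nalpha α c z := by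
  refine (Nalpha_nonneg hc z).lt_of_ne' fun h => ?_
  have hpow := Nalpha_pow_four_mul hα hc z
  rw [h, zero_pow (by omega)] at hpow
  linarith [pow_pos (eucNorm_pos hz) (4 * α), sum_mul_pow_two_mul_nonneg (α := α) hc z.2]

lemma differentiableAt_Nalpha (hc : ∀ j, 0 ≤ c j) {z : (Fin n₁ → ℝ) × (Fin n → ℝ)}
    (hz : z.1 ≠ 0) : DifferentiableAt ℝ (Nalpha α c) z := by
  have hpoly : Nalpha α c = fun z : (Fin n₁ → ℝ) × (Fin n → ℝ) =>
      ((∑ i, z.1 i ^ 2) ^ (2 * α) + ∑ j, c j * z.2 j ^ (2 * α)) ^ ((1 : ℝ) / (4 * α : ℝ)) :=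
    funext fun z => by rw [Nalpha, eucNorm_pow_four_mul]
  rw [hpoly]
  refine DifferentiableAt.rpow_const (by fun_prop) (Or.inl ?_)
  rw [← eucNorm_pow_four_mul]
  exact (add_pos_of_pos_of_nonneg (pow_pos (eucNorm_pos hz) _)
    (sum_mul_pow_two_mul_nonneg hc z.2)).ne'

lemma Nalpha_add_smul_fst (z : (Fin n₁ → ℝ) × (Fin n → ℝ)) (s : ℝ) :
    Nalpha α c (z + s • (z.1, 0)) =
      ((1 + s) ^ (4 * α) * eucNorm z.1 ^ (4 * α) + ∑ j, c j * z.2 j ^ (2 * α)) ^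
        ((1 : ℝ) / (4 * α : ℝ)) := by
  have hx : (z + s • (z.1, 0)).1 = (1 + s) • z.1 := by
    ext i
    simp only [Prod.fst_add, Prod.smul_fst, Pi.add_apply, Pi.smul_apply, smul_eq_mul]
    ring
  have ht : (z + s • (z.1, 0)).2 = z.2 := by simp
  rw [Nalpha, hx, ht, eucNorm_smul, mul_pow, (show Even (4 * α) from ⟨2 * α, by ring⟩).pow_abs]

lemma fderiv_Nalpha_apply_fst (hα : 0 < α) (hc : ∀ j, 0 ≤ c j)
    {z : (Fin n₁ → ℝ) × (Fin n → ℝ)} (hz : z.1 ≠ 0) :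
    fderiv ℝ (Nalpha α c) z (z.1, 0) = eucNorm z.1 ^ (4 * α) / Nalpha α c z ^ (4 * α - 1) := by
  set W := eucNorm z.1 ^ (4 * α)
  set T := ∑ j, c j * z.2 j ^ (2 * α)
  set r : ℝ := 1 / (4 * α : ℝ)
  have hQ : 0 < W + T :=
    add_pos_of_pos_of_nonneg (pow_pos (eucNorm_pos hz) _) (sum_mul_pow_two_mul_nonneg hc z.2)
  have hline : HasDerivAt (fun s : ℝ => Nalpha α c (z + s • (z.1, 0)))
      ((4 * α : ℕ) * W * r * (W + T) ^ (r - 1)) 0 := by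
    have hfun : (fun s : ℝ => Nalpha α c (z + s • (z.1, 0))) =
        fun s => ((1 + s) ^ (4 * α) * W + T) ^ r :=
      funext (Nalpha_add_smul_fst z)
    have hbase := ((((hasDerivAt_id (0 : ℝ)).const_add 1).pow (4 * α)).mul_const W).add_const T
    rw [hfun]
    convert hbase.rpow_const (p := r) (Or.inl (by simpa using hQ.ne')) using 1 <;> simp
  have hN : Nalpha α c z = (W + T) ^ r := rfl
  have hN4 : Nalpha α c z ^ (4 * α) = W + T := Nalpha_pow_four_mul hα hc z
  rw [← (differentiableAt_Nalpha hc hz).lineDeriv_eq_fderiv, lineDeriv, hline.deriv,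
    Real.rpow_sub_one hQ.ne', ← hN, ← hN4, ← pow_sub_one_mul (by omega : 4 * α ≠ 0)]
  have hN0 : Nalpha α c z ≠ 0 := (Nalpha_pos hα hc hz).ne'
  have hα' : (α : ℝ) ≠ 0 := by positivity
  simp only [r]
  field_simp
  push_cast
  ring

lemma eucNorm_pow_div_Nalpha_pow_le_gradLen {B : Fin n → Matrix (Fin n₁) (Fin n₁) ℝ}
    (hskew : ∀ k, (B k)ᵀ = -(B k)) (hα : 0 < α) (hc : ∀ j, 0 ≤ c j)
    (z : (Fin n₁ → ℝ) × (Fin n → ℝ)) :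
    eucNorm z.1 ^ (4 * α - 1) / Nalpha α c z ^ (4 * α - 1) ≤ gradLen B (Nalpha α c) z := by
  by_cases hz : z.1 = 0
  · have hw : eucNorm z.1 = 0 := by simp [eucNorm, hz]
    rw [hw, zero_pow (by omega), zero_div]
    exact Real.sqrt_nonneg _
  refine le_of_mul_le_mul_left ?_ (eucNorm_pos hz)
  calc eucNorm z.1 * (eucNorm z.1 ^ (4 * α - 1) / Nalpha α c z ^ (4 * α - 1))
      = eucNorm z.1 ^ (4 * α) / Nalpha α c z ^ (4 * α - 1) := by
        rw [mul_div_assoc', ← pow_succ', Nat.sub_add_cancel (by omega)]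
    _ = fderiv ℝ (Nalpha α c) z (z.1, 0) := (fderiv_Nalpha_apply_fst hα hc hz).symm
    _ ≤ eucNorm z.1 * gradLen B (Nalpha α c) z :=
        fderiv_apply_fst_le_eucNorm_mul_gradLen hskew _ z

end StepTwo

theorem Nalpha_gradient_lower_bound_general
    (n₁ n : ℕ)
    (B : Fin n → Matrix (Fin n₁) (Fin n₁) ℝ)
    (hskew : ∀ k, (B k)ᵀ = -(B k))
    (α : ℕ) (hα : 0 < α) (c : Fin n → ℝ) (hc : ∀ j, 0 < c j) :
    ∃ C : ℝ, 0 < C ∧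
      (∀ z : (Fin n₁ → ℝ) × (Fin n → ℝ), z ≠ 0 →
        C * eucNorm z.1 ^ (4 * α - 1) / Nalpha α c z ^ (4 * α - 1) ≤
          gradLen B (Nalpha α c) z) ∧
      ∀ j₀ : Fin n₁, ∀ z : (Fin n₁ → ℝ) × (Fin n → ℝ), z ≠ 0 →
        C * |z.1 j₀| ^ (4 * α - 1) / Nalpha α c z ^ (4 * α - 1) ≤
          gradLen B (Nalpha α c) z := by
  have hc' : ∀ j, 0 ≤ c j := fun j => (hc j).le
  have key := eucNorm_pow_div_Nalpha_pow_le_gradLen hskew hα hc'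
  refine ⟨1, one_pos, fun z _ => by simpa using key z, fun j₀ z _ => ?_⟩
  calc 1 * |z.1 j₀| ^ (4 * α - 1) / Nalpha α c z ^ (4 * α - 1)
      ≤ eucNorm z.1 ^ (4 * α - 1) / Nalpha α c z ^ (4 * α - 1) := by
        have hN := Nalpha_nonneg (α := α) hc' z
        rw [one_mul]
        gcongr
        exact abs_le_eucNorm z.1 j₀
    _ ≤ gradLen B (Nalpha α c) z := key z

/-- Proposition 4.1 of the paper: on a step-2 Carnot group, the quasi-norm `N_α` satisfies
`|∇_G N_α(z)| ≥ C ‖x‖^{4α−1}/N_α(z)^{4α−1}` for all `z = (x,t) ≠ 0`; in particular, since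
`‖x‖ ≥ |x_{j₀}|`, it satisfies Condition (G) with `γ = 4α` and any index `j₀`. -/
theorem Nalpha_gradient_lower_bound
    (n₁ n : ℕ) (hn₁ : 0 < n₁) (hn : 0 < n)
    (B : Fin n → Matrix (Fin n₁) (Fin n₁) ℝ)
    (hskew : ∀ k, (B k)ᵀ = -(B k))
    (hindep : ∀ τ : Fin n → ℝ, ∑ k, τ k • B k = 0 → τ = 0)
    (α : ℕ) (hα : 0 < α) (c : Fin n → ℝ) (hc : ∀ j, 0 < c j) :
    ∃ C : ℝ, 0 < C ∧
      (∀ z : (Fin n₁ → ℝ) × (Fin n → ℝ), z ≠ 0 →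
        C * eucNorm z.1 ^ (4 * α - 1) / Nalpha α c z ^ (4 * α - 1) ≤
          gradLen B (Nalpha α c) z) ∧
      ∀ j₀ : Fin n₁, ∀ z : (Fin n₁ → ℝ) × (Fin n → ℝ), z ≠ 0 →
        C * |z.1 j₀| ^ (4 * α - 1) / Nalpha α c z ^ (4 * α - 1) ≤
          gradLen B (Nalpha α c) z :=
  Nalpha_gradient_lower_bound_general n₁ n B hskew α hα c hc
end
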